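/- arXiv:2112.10995 — 5 statements merged into one kernel-verified Lean document; each statement's English description precedes it below -/
import Mathlib

section
/- Under the same hypotheses on W, the L^p norm of W satisfies ∫₀¹ W(x)^p dx = sqrt(2(p+1)) * ξ^((p+1)/2) * M_p, where M_p = ∫₀¹ s^p/sqrt(1-s^(p+1)) ds. -/
/-! The energy identity `W' = √((2/(p+1))(ξ^(p+1) - W^(p+1)))` on `[0, 1/2]` turns the
substitution `u = W x` into an integral over `[0, ξ]` whose integrand is explicit in `u`; the
scaling `u = ξ s` then extracts the power of `ξ`, and symmetry about `1/2` doubles the half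
integral. -/

open Real Set MeasureTheory

theorem setIntegral_Icc_comp_eq_of_hasDerivAt_comp {E : Type*} [NormedAddCommGroup E]
    [NormedSpace ℝ E] {W φ : ℝ → ℝ} {F : ℝ → E} {a b : ℝ} (hab : a ≤ b)
    (hW : ContinuousOn W (Icc a b)) (hderiv : ∀ x ∈ Ioo a b, HasDerivAt W (φ (W x)) x)
    (hφ : ∀ x ∈ Ioo a b, 0 < φ (W x)) :
    ∫ x in Icc a b, F (W x) = ∫ u in Icc (W a) (W b), (φ u)⁻¹ • F u := by
  rw [← integral_Icc_deriv_smul_of_deriv_nonneg hW hderiv (fun x hx ↦ (hφ x hx).le) hab,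
    integral_Icc_eq_integral_Ioo, integral_Icc_eq_integral_Ioo]
  exact setIntegral_congr_fun measurableSet_Ioo fun x hx ↦ (smul_inv_smul₀ (hφ x hx).ne' _).symm

theorem intervalIntegral.integral_eq_two_mul_of_symm {f : ℝ → ℝ} {a b : ℝ}
    (hf : IntervalIntegrable f volume a b)
    (hsymm : ∀ x ∈ uIcc a ((a + b) / 2), f x = f (a + b - x)) :
    ∫ x in a..b, f x = 2 * ∫ x in a..(a + b) / 2, f x := by
  have hmid : (a + b) / 2 ∈ uIcc a b := by
    rcases le_total a b with h | h
    · exact mem_uIcc.2 <| Or.inl ⟨by linarith, by linarith⟩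
    · exact mem_uIcc.2 <| Or.inr ⟨by linarith, by linarith⟩
  have hreflect : ∫ x in (a + b) / 2..b, f x = ∫ x in a..(a + b) / 2, f x := by
    rw [intervalIntegral.integral_congr hsymm, intervalIntegral.integral_comp_sub_left]
    ring_nf
  rw [← intervalIntegral.integral_add_adjacent_intervals (hf.mono_set (uIcc_subset_uIcc_left hmid))
    (hf.mono_set (uIcc_subset_uIcc_right hmid)), hreflect, two_mul]

theorem integral_rpow_div_sqrt_sub_rpow {p ξ c : ℝ} (hξ : 0 < ξ) (hc : 0 ≤ c) :
    ∫ u in (0:ℝ)..ξ, u ^ p / √(c * (ξ ^ (p + 1) - u ^ (p + 1))) =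
      ξ ^ ((p + 1) / 2) / √c * ∫ s in (0:ℝ)..1, s ^ p / √(1 - s ^ (p + 1)) := by
  have hpoint : ∀ s, 0 ≤ s → ξ * ((ξ * s) ^ p / √(c * (ξ ^ (p + 1) - (ξ * s) ^ (p + 1)))) =
      ξ ^ ((p + 1) / 2) / √c * (s ^ p / √(1 - s ^ (p + 1))) := by
    intro s hs
    have hroot : √(ξ ^ (p + 1)) = ξ ^ ((p + 1) / 2) := by
      rw [sqrt_eq_rpow, ← rpow_mul hξ.le]; ring_nf
    have hpow : ξ * ξ ^ p = ξ ^ ((p + 1) / 2) * ξ ^ ((p + 1) / 2) := by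
      rw [← rpow_add hξ, add_halves, rpow_add hξ, rpow_one, mul_comm]
    rw [mul_rpow hξ.le hs, mul_rpow hξ.le hs,
      show c * (ξ ^ (p + 1) - ξ ^ (p + 1) * s ^ (p + 1)) = c * ξ ^ (p + 1) * (1 - s ^ (p + 1)) by
        ring, sqrt_mul (by positivity), sqrt_mul hc, hroot]
    have hroot_pos : 0 < ξ ^ ((p + 1) / 2) := by positivity
    field_simp
    rw [hpow]
    ring
  rw [← intervalIntegral.integral_const_mul, ← intervalIntegral.integral_congr fun s hs ↦
    hpoint s (by rw [uIcc_of_le zero_le_one] at hs; exact hs.1), intervalIntegral.integral_const_mul,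
    ← smul_eq_mul, intervalIntegral.smul_integral_comp_mul_left
      (fun u ↦ u ^ p / √(c * (ξ ^ (p + 1) - u ^ (p + 1)))) ξ, mul_zero, mul_one]

theorem stmt4_general (p : ℝ) (hp : 1 < p) (W W' : ℝ → ℝ) (ξ : ℝ)
    (hW' : ∀ x ∈ Icc (0:ℝ) 1, HasDerivAt W (W' x) x)
    (hpos : ∀ x ∈ Ioo (0:ℝ) 1, 0 < W x)
    (hb0 : W 0 = 0)
    (hsym : ∀ x ∈ Icc (0:ℝ) (1/2), W x = W (1 - x))
    (hξ : ξ = W (1/2))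
    (hmono : ∀ x ∈ Ico (0:ℝ) (1/2), 0 < W' x)
    (hderiv : ∀ x ∈ Icc (0:ℝ) (1/2),
      W' x = Real.sqrt ((2/(p+1)) * (ξ ^ (p+1) - (W x) ^ (p+1)))) :
    ∫ x in (0:ℝ)..1, (W x) ^ p =
      Real.sqrt (2*(p+1)) * ξ ^ ((p+1)/2) *
        (∫ s in (0:ℝ)..1, s ^ p / Real.sqrt (1 - s ^ (p+1))) := by
  have hξpos : 0 < ξ := hξ ▸ hpos (1/2) (by norm_num)
  have hcont : ContinuousOn W (Icc 0 1) := fun x hx ↦ (hW' x hx).continuousAt.continuousWithinAt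
  have hhalf : Icc (0:ℝ) (1/2) ⊆ Icc 0 1 := Icc_subset_Icc_right (by norm_num)
  have hquadrature : ∫ x in (0:ℝ)..1/2, W x ^ p =
      ∫ u in (0:ℝ)..ξ, u ^ p / √((2/(p+1)) * (ξ ^ (p+1) - u ^ (p+1))) := by
    have h := setIntegral_Icc_comp_eq_of_hasDerivAt_comp (F := fun u ↦ u ^ p)
      (φ := fun u ↦ √((2/(p+1)) * (ξ ^ (p+1) - u ^ (p+1)))) (by norm_num) (hcont.mono hhalf)
      (fun x hx ↦ hderiv x (Ioo_subset_Icc_self hx) ▸ hW' x (hhalf (Ioo_subset_Icc_self hx)))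
      (fun x hx ↦ hderiv x (Ioo_subset_Icc_self hx) ▸ hmono x (Ioo_subset_Ico_self hx))
    rw [hb0, ← hξ] at h
    simp only [smul_eq_mul, inv_mul_eq_div] at h
    rw [intervalIntegral.integral_of_le (by norm_num), intervalIntegral.integral_of_le hξpos.le,
      ← integral_Icc_eq_integral_Ioc, ← integral_Icc_eq_integral_Ioc, h]
  have hsymm := intervalIntegral.integral_eq_two_mul_of_symm (f := fun x ↦ W x ^ p) (a := 0) (b := 1)
    ((hcont.rpow_const fun _ _ ↦ Or.inr (by linarith)).intervalIntegrable_of_Icc zero_le_one)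
    fun x hx ↦ by
      rw [uIcc_of_le (by norm_num), zero_add] at hx
      rw [zero_add, hsym x hx]
  have hsqrt : √(2*(p+1)) * √(2/(p+1)) = 2 := by
    rw [← sqrt_mul (by positivity), show 2*(p+1) * (2/(p+1)) = 2 * 2 by field_simp,
      sqrt_mul_self zero_le_two]
  rw [hsymm, show ((0:ℝ) + 1) / 2 = 1/2 by norm_num, hquadrature,
    integral_rpow_div_sqrt_sub_rpow hξpos (by positivity)]
  have hc : √(2/(p+1)) ≠ 0 := (sqrt_pos.2 (by positivity)).ne'
  nth_rw 1 [← hsqrt]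
  field_simp

theorem stmt4 (p : ℝ) (hp : 1 < p) (W W' : ℝ → ℝ) (ξ : ℝ)
    (hW' : ∀ x ∈ Icc (0:ℝ) 1, HasDerivAt W (W' x) x)
    (hpos : ∀ x ∈ Ioo (0:ℝ) 1, 0 < W x)
    (hb0 : W 0 = 0) (hb1 : W 1 = 0)
    (hsym : ∀ x ∈ Icc (0:ℝ) (1/2), W x = W (1 - x))
    (hξ : ξ = W (1/2)) (hmax : ∀ x ∈ Icc (0:ℝ) 1, W x ≤ ξ)
    (hmono : ∀ x ∈ Ico (0:ℝ) (1/2), 0 < W' x)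
    (hderiv : ∀ x ∈ Icc (0:ℝ) (1/2),
      W' x = Real.sqrt ((2/(p+1)) * (ξ ^ (p+1) - (W x) ^ (p+1)))) :
    ∫ x in (0:ℝ)..1, (W x) ^ p =
      Real.sqrt (2*(p+1)) * ξ ^ ((p+1)/2) *
        (∫ s in (0:ℝ)..1, s ^ p / Real.sqrt (1 - s ^ (p+1))) :=
  stmt4_general p hp W W' ξ hW' hpos hb0 hsym hξ hmono hderiv
end

section
/- Let p ≥ 1, q > 1 - 1/p with p > 1, b > 0, c > 0. For λ large, the largest positive root t₂(λ) of (t^p + b)^q = λ c t^(p-1) satisfies t₂(λ) = m λ^(1/(pq-p+1)) - (bq m^(1-p)/(pq-p+1)) λ^((1-p)/(pq-p+1)) (1+o(1)) as λ → ∞, where m := c^(1/(pq-p+1)). -/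
/-!
Put `κ = pq - p + 1`, `t = λ^(1/κ) v` and `y = λ^(-p/κ)`. Dividing by `λ t^(p-1)`, the equation
becomes `(v^p + b y)^q v^(1-p) = c`, whose root at `y = 0` is `v = m`. Along the line
`v = m + a y` the left side has slope `m^(pq-p) (κ a + q b m^(1-p))` at `y = 0`, so for small
`y > 0` it lies above `c` when `a > A := -b q m^(1-p) / κ` and below `c` when `a < A`.
As `t ↦ (t^p + b)^q t^(1-p)` is strictly increasing for large `t`, the intermediate value
theorem and the maximality of `t₂` trap `t₂ λ` between `λ^(1/κ) (m + a y)` and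
`λ^(1/κ) (m + a' y)` for every `a < A < a'`, which is the claimed expansion.
-/

open Real Filter Set Topology

theorem HasDerivAt.eventually_nhdsGT_lt {f : ℝ → ℝ} {f' x : ℝ} (hf : HasDerivAt f f' x)
    (hf' : 0 < f') : ∀ᶠ y in 𝓝[>] x, f x < f y := by
  have hslope : Tendsto (slope f x) (𝓝[>] x) (𝓝 f') :=
    (hasDerivAt_iff_tendsto_slope.1 hf).mono_left
      (nhdsWithin_mono _ fun _ hy => ne_of_gt (mem_Ioi.1 hy))
  filter_upwards [hslope.eventually (eventually_gt_nhds hf'), self_mem_nhdsWithin] with y hy hxy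
  exact (slope_pos_iff hxy).1 hy

theorem HasDerivAt.eventually_nhdsGT_gt {f : ℝ → ℝ} {f' x : ℝ} (hf : HasDerivAt f f' x)
    (hf' : f' < 0) : ∀ᶠ y in 𝓝[>] x, f y < f x := by
  simpa using hf.neg.eventually_nhdsGT_lt (neg_pos.2 hf')

theorem StrictMonoOn.lt_and_lt_of_forall_root_le {f : ℝ → ℝ} {S l u y t : ℝ}
    (hmono : StrictMonoOn f (Ici S)) (hcont : ContinuousOn f (Ici S)) (hSl : S ≤ l)
    (hlu : l ≤ u) (hl : f l < y) (hu : y < f u) (ht : f t = y)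
    (hmax : ∀ s, S ≤ s → f s = y → s ≤ t) : l < t ∧ t < u := by
  obtain ⟨s, hs, hfs⟩ := intermediate_value_Icc hlu
    (hcont.mono (Icc_subset_Ici_self.trans (Ici_subset_Ici.2 hSl))) ⟨hl.le, hu.le⟩
  have hSt : S ≤ t := hSl.trans (hs.1.trans (hmax s (hSl.trans hs.1) hfs))
  constructor
  · by_contra! htl
    have := hmono.monotoneOn hSt hSl htl
    linarith
  · by_contra! hut
    have := hmono.monotoneOn (hSl.trans hlu) hSt hut
    linarith

noncomputable def eqnRatio (p q b t : ℝ) : ℝ := (t ^ p + b) ^ q * t ^ (1 - p)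

theorem rpow_eq_mul_rpow_iff_eqnRatio_eq {p q b t L : ℝ} (ht : 0 < t) :
    (t ^ p + b) ^ q = L * t ^ (p - 1) ↔ eqnRatio p q b t = L := by
  rw [eqnRatio, show 1 - p = -(p - 1) by ring, rpow_neg ht.le, ← div_eq_mul_inv,
    div_eq_iff (rpow_pos_of_pos ht _).ne']

theorem HasDerivAt.eqnRatio {p q : ℝ} {β v : ℝ → ℝ} {β' v' y : ℝ} (hβ : HasDerivAt β β' y)
    (hv : HasDerivAt v v' y) (hv0 : 0 < v y) (hX0 : 0 < v y ^ p + β y) :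
    HasDerivAt (fun y => eqnRatio p q (β y) (v y))
      ((v y ^ p + β y) ^ (q - 1) *
        ((p * q - p + 1 - (p - 1) * β y * v y ^ (-p)) * v' + q * β' * v y ^ (1 - p))) y := by
  have hX := ((hv.rpow_const (p := p) (Or.inl hv0.ne')).add hβ).rpow_const (p := q)
    (Or.inl hX0.ne')
  refine (hX.mul (hv.rpow_const (p := 1 - p) (Or.inl hv0.ne'))).congr_deriv ?_
  simp only [Pi.add_apply]
  have hE1 : v y ^ (p - 1) * v y ^ (1 - p) = 1 := by rw [← rpow_add hv0]; simp
  have hE2 : v y ^ p * v y ^ (-p) = 1 := by rw [← rpow_add hv0]; simp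
  have hE3 : (v y ^ p + β y) ^ q = (v y ^ p + β y) ^ (q - 1) * (v y ^ p + β y) := by
    rw [← rpow_add_one hX0.ne']; ring_nf
  rw [hE3, show 1 - p - 1 = -p by ring]
  linear_combination ((v y ^ p + β y) ^ (q - 1) * v' * (p * q)) * hE1
    + ((v y ^ p + β y) ^ (q - 1) * v' * (1 - p)) * hE2

theorem hasDerivAt_eqnRatio {p q b t : ℝ} (hb : 0 ≤ b) (ht : 0 < t) :
    HasDerivAt (eqnRatio p q b)
      ((t ^ p + b) ^ (q - 1) * (p * q - p + 1 - (p - 1) * b * t ^ (-p))) t := by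
  have hX0 : 0 < t ^ p + b := by positivity
  simpa using (hasDerivAt_const t b).eqnRatio (p := p) (q := q) (hasDerivAt_id t) ht hX0

theorem exists_strictMonoOn_eqnRatio {p q b : ℝ} (hp : 0 < p) (hK : 0 < p * q - p + 1)
    (hb : 0 ≤ b) : ∃ S > 0, StrictMonoOn (eqnRatio p q b) (Ici S) ∧
      ContinuousOn (eqnRatio p q b) (Ici S) := by
  have hsmall : Tendsto (fun t : ℝ => (p - 1) * b * t ^ (-p)) atTop (𝓝 0) := by
    simpa using (tendsto_rpow_neg_atTop hp).const_mul ((p - 1) * b)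
  obtain ⟨S, hS⟩ := eventually_atTop.1
    ((hsmall.eventually (eventually_lt_nhds hK)).and (eventually_gt_atTop 0))
  have hderiv : ∀ t ∈ Ici S, HasDerivAt (eqnRatio p q b)
      ((t ^ p + b) ^ (q - 1) * (p * q - p + 1 - (p - 1) * b * t ^ (-p))) t :=
    fun t ht => hasDerivAt_eqnRatio hb (hS t ht).2
  have hcont : ContinuousOn (eqnRatio p q b) (Ici S) :=
    fun t ht => (hderiv t ht).continuousAt.continuousWithinAt
  refine ⟨S, (hS S le_rfl).2, strictMonoOn_of_hasDerivWithinAt_pos (convex_Ici S) hcont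
    (fun t ht => (hderiv t (interior_subset ht)).hasDerivWithinAt) fun t ht => ?_, hcont⟩
  obtain ⟨hlt, ht0⟩ := hS t (interior_subset ht)
  have : 0 < t ^ p + b := by positivity
  have := sub_pos.2 hlt
  positivity

theorem eqnRatio_rpow_mul {p q b lam v : ℝ} (hK : p * q - p + 1 ≠ 0) (hb : 0 ≤ b)
    (hlam : 0 < lam) (hv : 0 < v) :
    eqnRatio p q b (lam ^ (1 / (p * q - p + 1)) * v)
      = lam * eqnRatio p q (b * lam ^ (-(p / (p * q - p + 1)))) v := by
  set κ := p * q - p + 1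
  have hpow : ∀ r, (lam ^ (1 / κ) * v) ^ r = lam ^ (r / κ) * v ^ r := fun r => by
    rw [mul_rpow (by positivity) hv.le, ← rpow_mul hlam.le, one_div_mul_eq_div]
  have hbase : (lam ^ (1 / κ) * v) ^ p + b
      = lam ^ (p / κ) * (v ^ p + b * lam ^ (-(p / κ))) := by
    rw [hpow, mul_add, mul_left_comm, ← rpow_add hlam, add_neg_cancel, rpow_zero, mul_one]
  have hlam_eq : lam ^ (p / κ * q) * lam ^ ((1 - p) / κ) = lam := by
    rw [← rpow_add hlam, show p / κ * q + (1 - p) / κ = 1 by field_simp; ring, rpow_one]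
  rw [eqnRatio, eqnRatio, hbase, mul_rpow (by positivity) (by positivity), hpow,
    ← rpow_mul hlam.le]
  linear_combination ((v ^ p + b * lam ^ (-(p / κ))) ^ q * v ^ (1 - p)) * hlam_eq

theorem eqnRatio_zero {p q m : ℝ} (hm : 0 < m) : eqnRatio p q 0 m = m ^ (p * q - p + 1) := by
  rw [eqnRatio, add_zero, ← rpow_mul hm.le, ← rpow_add hm]
  ring_nf

theorem hasDerivAt_eqnRatio_line {p q b m a : ℝ} (hm : 0 < m) :
    HasDerivAt (fun y => eqnRatio p q (b * y) (m + a * y))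
      ((m ^ p) ^ (q - 1) * ((p * q - p + 1) * a + q * b * m ^ (1 - p))) 0 := by
  have h := ((hasDerivAt_id (0 : ℝ)).const_mul b).eqnRatio (p := p) (q := q)
    (((hasDerivAt_id (0 : ℝ)).const_mul a).const_add m) (by simpa using hm)
    (by simpa using rpow_pos_of_pos hm p)
  simpa using h

theorem rpow_div_mul_add_mul_rpow_neg_div {lam : ℝ} (hlam : 0 < lam) (κ m a p : ℝ) :
    lam ^ (1 / κ) * (m + a * lam ^ (-(p / κ))) = m * lam ^ (1 / κ) + a * lam ^ ((1 - p) / κ) := by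
  rw [mul_add, mul_left_comm, ← rpow_add hlam, show 1 / κ + -(p / κ) = (1 - p) / κ by ring]
  ring

theorem tendsto_rpow_neg_atTop_nhdsGT_zero {r : ℝ} (hr : 0 < r) :
    Tendsto (fun lam : ℝ => lam ^ (-r)) atTop (𝓝[>] 0) :=
  tendsto_nhdsWithin_iff.2 ⟨tendsto_rpow_neg_atTop hr,
    (eventually_gt_atTop 0).mono fun _ hlam => rpow_pos_of_pos hlam _⟩

theorem tendsto_add_mul_rpow_neg_atTop (m a : ℝ) {r : ℝ} (hr : 0 < r) :
    Tendsto (fun lam : ℝ => m + a * lam ^ (-r)) atTop (𝓝 m) := by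
  simpa using ((tendsto_rpow_neg_atTop hr).const_mul a).const_add m

section Asymptotics

variable {p q b m a : ℝ}

theorem eventually_lt_eqnRatio_line (hm : 0 < m) (hK : 0 < p * q - p + 1)
    (ha : -(b * q * m ^ (1 - p) / (p * q - p + 1)) < a) :
    ∀ᶠ y in 𝓝[>] 0, m ^ (p * q - p + 1) < eqnRatio p q (b * y) (m + a * y) := by
  have hslope : 0 < (p * q - p + 1) * a + q * b * m ^ (1 - p) := by
    rw [neg_lt, lt_div_iff₀ hK] at ha
    linarith
  have hD : 0 < (m ^ p) ^ (q - 1) * ((p * q - p + 1) * a + q * b * m ^ (1 - p)) := by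
    have := rpow_pos_of_pos hm p
    positivity
  simpa [eqnRatio_zero hm] using (hasDerivAt_eqnRatio_line hm).eventually_nhdsGT_lt hD

theorem eventually_eqnRatio_line_lt (hm : 0 < m) (hK : 0 < p * q - p + 1)
    (ha : a < -(b * q * m ^ (1 - p) / (p * q - p + 1))) :
    ∀ᶠ y in 𝓝[>] 0, eqnRatio p q (b * y) (m + a * y) < m ^ (p * q - p + 1) := by
  have hslope : (p * q - p + 1) * a + q * b * m ^ (1 - p) < 0 := by
    rw [lt_neg, div_lt_iff₀ hK] at ha
    linarith
  have hD : (m ^ p) ^ (q - 1) * ((p * q - p + 1) * a + q * b * m ^ (1 - p)) < 0 :=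
    mul_neg_of_pos_of_neg (rpow_pos_of_pos (rpow_pos_of_pos hm p) _) hslope
  simpa [eqnRatio_zero hm] using (hasDerivAt_eqnRatio_line hm).eventually_nhdsGT_gt hD

variable (p q b m a)

theorem tendsto_scaled_line_atTop (hm : 0 < m) (hp : 0 < p) (hK : 0 < p * q - p + 1) :
    Tendsto (fun lam : ℝ => lam ^ (1 / (p * q - p + 1)) * (m + a * lam ^ (-(p / (p * q - p + 1)))))
      atTop atTop := by
  exact (tendsto_rpow_atTop (by positivity)).atTop_mul_pos hm
    (tendsto_add_mul_rpow_neg_atTop m a (div_pos hp hK))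

theorem eventually_eqnRatio_scaled_line_eq (hm : 0 < m) (hp : 0 < p) (hK : 0 < p * q - p + 1)
    (hb : 0 ≤ b) : ∀ᶠ lam in atTop,
      eqnRatio p q b (lam ^ (1 / (p * q - p + 1)) * (m + a * lam ^ (-(p / (p * q - p + 1)))))
        = lam * eqnRatio p q (b * lam ^ (-(p / (p * q - p + 1))))
          (m + a * lam ^ (-(p / (p * q - p + 1)))) := by
  filter_upwards [(tendsto_add_mul_rpow_neg_atTop m a (div_pos hp hK)).eventually
    (eventually_gt_nhds hm), eventually_gt_atTop 0]
    with lam hv hlam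
  exact eqnRatio_rpow_mul hK.ne' hb hlam hv

variable {p q b m a}

theorem eventually_mul_lt_eqnRatio_scaled_line (hm : 0 < m) (hp : 0 < p)
    (hK : 0 < p * q - p + 1) (hb : 0 ≤ b) (ha : -(b * q * m ^ (1 - p) / (p * q - p + 1)) < a) :
    ∀ᶠ lam in atTop, lam * m ^ (p * q - p + 1) <
      eqnRatio p q b (lam ^ (1 / (p * q - p + 1)) * (m + a * lam ^ (-(p / (p * q - p + 1))))) := by
  filter_upwards [eventually_eqnRatio_scaled_line_eq p q b m a hm hp hK hb,
    (tendsto_rpow_neg_atTop_nhdsGT_zero (div_pos hp hK)).eventually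
      (eventually_lt_eqnRatio_line hm hK ha), eventually_gt_atTop 0] with lam hscale hlt hlam
  rw [hscale]
  exact mul_lt_mul_of_pos_left hlt hlam

theorem eventually_eqnRatio_scaled_line_lt_mul (hm : 0 < m) (hp : 0 < p)
    (hK : 0 < p * q - p + 1) (hb : 0 ≤ b) (ha : a < -(b * q * m ^ (1 - p) / (p * q - p + 1))) :
    ∀ᶠ lam in atTop, eqnRatio p q b
      (lam ^ (1 / (p * q - p + 1)) * (m + a * lam ^ (-(p / (p * q - p + 1)))))
        < lam * m ^ (p * q - p + 1) := by
  filter_upwards [eventually_eqnRatio_scaled_line_eq p q b m a hm hp hK hb,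
    (tendsto_rpow_neg_atTop_nhdsGT_zero (div_pos hp hK)).eventually
      (eventually_eqnRatio_line_lt hm hK ha), eventually_gt_atTop 0] with lam hscale hlt hlam
  rw [hscale]
  exact mul_lt_mul_of_pos_left hlt hlam

end Asymptotics

theorem tendsto_div_of_forall_squeeze {α : Type*} {l : Filter α} {f g h : α → ℝ} {A : ℝ}
    (hh : ∀ᶠ x in l, 0 < h x)
    (hsq : ∀ a a', a < A → A < a' → ∀ᶠ x in l, g x + a * h x < f x ∧ f x < g x + a' * h x) :
    Tendsto (fun x => (f x - g x) / h x) l (𝓝 A) := by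
  rw [tendsto_order]
  constructor
  · intro a ha
    filter_upwards [hsq a _ ha (lt_add_one _), hh] with x hx hx0
    rw [lt_div_iff₀ hx0]
    linarith [hx.1]
  · intro a' ha'
    filter_upwards [hsq _ a' (sub_one_lt _) ha', hh] with x hx hx0
    rw [div_lt_iff₀ hx0]
    linarith [hx.2]

theorem stmt14 (p q b c : ℝ) (hp : 1 < p) (hq : q > 1 - 1/p)
    (hb : 0 < b) (hc : 0 < c)
    (m : ℝ) (hm : m = c ^ (1/(p*q - p + 1)))
    (t₂ : ℝ → ℝ)
    (hroot : ∀ᶠ lam in atTop, 0 < t₂ lam ∧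
      ((t₂ lam) ^ p + b) ^ q = lam * c * (t₂ lam) ^ (p-1) ∧
      ∀ s : ℝ, 0 < s → (s ^ p + b) ^ q = lam * c * s ^ (p-1) → s ≤ t₂ lam) :
    Tendsto
      (fun lam => (t₂ lam - m * lam ^ (1/(p*q - p + 1))) /
        lam ^ ((1-p)/(p*q - p + 1))) atTop
      (nhds (-(b * q * m ^ (1-p) / (p*q - p + 1)))) := by
  have hp0 : 0 < p := by linarith
  have hK : 0 < p * q - p + 1 := by
    have := mul_lt_mul_of_pos_left hq hp0
    rw [mul_sub, mul_one_div_cancel hp0.ne'] at this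
    linarith
  have hm0 : 0 < m := hm ▸ rpow_pos_of_pos hc _
  have hc_eq : c = m ^ (p * q - p + 1) := by
    rw [hm, ← rpow_mul hc.le, one_div_mul_cancel hK.ne', rpow_one]
  rw [hc_eq] at hroot
  obtain ⟨S, hS0, hmono, hcont⟩ := exists_strictMonoOn_eqnRatio hp0 hK hb.le
  set A := -(b * q * m ^ (1 - p) / (p * q - p + 1))
  have hsqueeze : ∀ a a', a < A → A < a' → ∀ᶠ lam in atTop,
        m * lam ^ (1 / (p * q - p + 1)) + a * lam ^ ((1 - p) / (p * q - p + 1)) < t₂ lam ∧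
        t₂ lam < m * lam ^ (1 / (p * q - p + 1)) + a' * lam ^ ((1 - p) / (p * q - p + 1)) := by
    intro a a' ha ha'
    filter_upwards [hroot, eventually_eqnRatio_scaled_line_lt_mul hm0 hp0 hK hb.le ha,
      eventually_mul_lt_eqnRatio_scaled_line hm0 hp0 hK hb.le ha',
      (tendsto_scaled_line_atTop p q m a hm0 hp0 hK).eventually_ge_atTop S,
      eventually_gt_atTop 0] with lam ⟨ht0, hteq, hmax⟩ hl hu hSl hlam
    rw [← rpow_div_mul_add_mul_rpow_neg_div hlam, ← rpow_div_mul_add_mul_rpow_neg_div hlam]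
    refine hmono.lt_and_lt_of_forall_root_le hcont hSl ?_ hl hu
      ((rpow_eq_mul_rpow_iff_eqnRatio_eq ht0).1 hteq) fun s hs hfs => hmax s (hS0.trans_le hs)
        ((rpow_eq_mul_rpow_iff_eqnRatio_eq (hS0.trans_le hs)).2 hfs)
    have := rpow_pos_of_pos hlam (-(p / (p * q - p + 1)))
    gcongr
    linarith
  exact tendsto_div_of_forall_squeeze
    ((eventually_gt_atTop 0).mono fun lam hlam => rpow_pos_of_pos hlam _) hsqueeze
end

section
/- Let p > 1, q > 1 - 1/p, b > 0, c > 0. For λ large, the smallest positive root t₁(λ) of (t^p + b)^q = λ c t^(p-1) satisfies t₁(λ) = b^(q/(p-1)) (λ c)^(-1/(p-1)) · (1 + (q/(p-1)) b^((pq-p+1)/(p-1)) (λc)^(-p/(p-1)) (1 + o(1))) as λ → ∞. -/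
open Real Filter Topology Set

/-!
Put `u = t ^ p / b` and `r = q / (p - 1)`. Since `t ^ p + b = b (1 + u)`, the root equation
solved for `t` reads `t = A (1 + u) ^ r` with `A = b ^ r (λ c) ^ (-1 / (p - 1))`, and the
normalising factor `b ^ ((p q - p + 1) / (p - 1)) (λ c) ^ (-p / (p - 1))` equals
`A ^ p / b = u / (1 + u) ^ (r p)`. Hence the normalised error is
`((1 + u) ^ r - 1) (1 + u) ^ (r p) / (r u)`, which tends to `1` as `u → 0` since `(1 + u) ^ r`
has derivative `r` at `0`. Finally `u → 0⁺`: by the intermediate value theorem the equation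
has a root in `(0, ε]` once `λ` is large, and `t₁ λ` lies below every positive root.
-/

lemma exists_root_mem_Ioc {p q b c lam e : ℝ} (hp : 1 < p) (hb : 0 < b) (hc : 0 < c)
    (he : 0 < e) (hlam : (e ^ p + b) ^ q / (c * e ^ (p - 1)) ≤ lam) :
    ∃ s ∈ Ioc 0 e, (s ^ p + b) ^ q = lam * c * s ^ (p - 1) := by
  set g : ℝ → ℝ := fun t => (t ^ p + b) ^ q - lam * c * t ^ (p - 1)
  have hg : ContinuousOn g (Icc 0 e) := by
    refine ContinuousOn.sub (fun t ht => ?_) (by fun_prop (disch := linarith))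
    have hbase : t ^ p + b ≠ 0 := by linarith [rpow_nonneg ht.1 p]
    have : ContinuousAt (fun t : ℝ => (t ^ p + b) ^ q) t :=
      ((continuousAt_rpow_const t p (.inr (by linarith))).add continuousAt_const).rpow_const
        (.inl hbase)
    exact this.continuousWithinAt
  have hg0 : g 0 = b ^ q := by
    simp [g, zero_rpow (by linarith : p ≠ 0), zero_rpow (by linarith : p - 1 ≠ 0)]
  have hge : g e ≤ 0 := by
    have := (div_le_iff₀ (by positivity)).mp hlam
    simp only [g]
    linarith
  obtain ⟨s, hs, hgs⟩ := intermediate_value_Ioc' he.le hg ⟨hge, hg0 ▸ rpow_pos_of_pos hb q⟩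
  exact ⟨s, hs, sub_eq_zero.mp hgs⟩

lemma tendsto_nhdsGT_zero_of_le_pos_roots {p q b c : ℝ} (hp : 1 < p) (hb : 0 < b) (hc : 0 < c)
    {t₁ : ℝ → ℝ} (ht₁ : ∀ᶠ lam in atTop, 0 < t₁ lam ∧
      ∀ s : ℝ, 0 < s → (s ^ p + b) ^ q = lam * c * s ^ (p - 1) → t₁ lam ≤ s) :
    Tendsto t₁ atTop (𝓝[>] 0) := by
  refine tendsto_nhdsWithin_iff.2 ⟨tendsto_order.2 ⟨fun a ha => ?_, fun ε hε => ?_⟩,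
    ht₁.mono fun _ h => h.1⟩
  · exact ht₁.mono fun _ h => ha.trans h.1
  · filter_upwards [ht₁, eventually_ge_atTop (((ε / 2) ^ p + b) ^ q / (c * (ε / 2) ^ (p - 1)))]
      with lam hlow hlam
    obtain ⟨s, hs, hroot⟩ := exists_root_mem_Ioc hp hb hc (half_pos hε) hlam
    linarith [hlow.2 s hs.1 hroot, hs.2]

lemma tendsto_one_add_rpow_sub_one_div (r : ℝ) :
    Tendsto (fun u : ℝ => ((1 + u) ^ r - 1) / u) (𝓝[≠] 0) (𝓝 r) := by
  have hd : HasDerivAt (fun u : ℝ => (1 + u) ^ r) r 0 := by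
    simpa using ((hasDerivAt_id (0 : ℝ)).const_add 1).rpow_const (p := r) (by simp)
  simpa [div_eq_inv_mul] using hd.tendsto_slope_zero

lemma tendsto_one_add_rpow_sub_one_mul_rpow_div {r : ℝ} (hr : r ≠ 0) (s : ℝ) :
    Tendsto (fun u : ℝ => ((1 + u) ^ r - 1) * (1 + u) ^ s / (r * u)) (𝓝[≠] 0) (𝓝 1) := by
  have hs : Tendsto (fun u : ℝ => (1 + u) ^ s) (𝓝[≠] 0) (𝓝 1) := by
    have : ContinuousAt (fun u : ℝ => (1 + u) ^ s) 0 := by fun_prop (disch := norm_num)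
    simpa using this.tendsto.mono_left nhdsWithin_le_nhds
  have := ((tendsto_one_add_rpow_sub_one_div r).mul hs).div_const r
  rw [mul_one, div_self hr] at this
  refine this.congr fun u => ?_
  rw [div_mul_eq_mul_div, div_div, mul_comm u r]

lemma root_error_ratio_eq {p q b L t : ℝ} (hp : p ≠ 1) (hb : 0 < b) (hL : 0 < L) (ht : 0 < t)
    (h : (t ^ p + b) ^ q = L * t ^ (p - 1)) :
    (t / (b ^ (q / (p - 1)) * L ^ (-1 / (p - 1))) - 1) /
        (q / (p - 1) * b ^ ((p * q - p + 1) / (p - 1)) * L ^ (-p / (p - 1))) =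
      ((1 + t ^ p / b) ^ (q / (p - 1)) - 1) * (1 + t ^ p / b) ^ (q / (p - 1) * p) /
        (q / (p - 1) * (t ^ p / b)) := by
  have hp1 : p - 1 ≠ 0 := sub_ne_zero.2 hp
  set r := q / (p - 1) with hr
  set u := t ^ p / b
  set A := b ^ r * L ^ (-1 / (p - 1))
  have hu : 0 < u := by positivity
  have hA : 0 < A := by positivity
  have ht_eq : t = A * (1 + u) ^ r := by
    have hsplit : t ^ p + b = b * (1 + u) := by simp only [u]; field_simp; ring
    have htp : t ^ (p - 1) = L⁻¹ * (b ^ q * (1 + u) ^ q) := by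
      rw [← mul_rpow hb.le (by positivity), ← hsplit, h, inv_mul_cancel_left₀ hL.ne']
    calc t = (t ^ (p - 1)) ^ (1 / (p - 1)) := by
          rw [← rpow_mul ht.le, mul_one_div_cancel hp1, rpow_one]
      _ = A * (1 + u) ^ r := by
          rw [htp, mul_rpow (by positivity) (by positivity), mul_rpow (by positivity) (by positivity),
            ← rpow_mul hb.le, ← rpow_mul (by positivity), inv_rpow hL.le, ← rpow_neg hL.le]
          simp only [A, hr, neg_div, mul_one_div]
          ring
  have hden : b ^ ((p * q - p + 1) / (p - 1)) * L ^ (-p / (p - 1)) = u / (1 + u) ^ (r * p) := by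
    have hexp : (p * q - p + 1) / (p - 1) = r * p - 1 := by
      rw [hr]; field_simp; ring
    have hAp : A ^ p = b ^ (r * p) * L ^ (-p / (p - 1)) := by
      rw [mul_rpow (by positivity) (by positivity), ← rpow_mul hb.le, ← rpow_mul hL.le]
      ring_nf
    have hAp' : A ^ p = t ^ p / (1 + u) ^ (r * p) := by
      rw [ht_eq, mul_rpow hA.le (by positivity), ← rpow_mul (by positivity)]
      field_simp
    calc b ^ ((p * q - p + 1) / (p - 1)) * L ^ (-p / (p - 1))
        = A ^ p / b := by rw [hexp, rpow_sub_one hb.ne', hAp]; ring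
      _ = u / (1 + u) ^ (r * p) := by rw [hAp']; ring
  have htA : t / A = (1 + u) ^ r := by rw [ht_eq, mul_div_cancel_left₀ _ hA.ne']
  rw [htA, mul_assoc, hden, mul_div_assoc', div_div_eq_mul_div]

theorem stmt15 (p q b c : ℝ) (hp : 1 < p) (hq : q > 1 - 1/p)
    (hb : 0 < b) (hc : 0 < c)
    (t₁ : ℝ → ℝ)
    (hroot : ∀ᶠ lam in atTop, 0 < t₁ lam ∧
      ((t₁ lam) ^ p + b) ^ q = lam * c * (t₁ lam) ^ (p-1) ∧
      ∀ s : ℝ, 0 < s → (s ^ p + b) ^ q = lam * c * s ^ (p-1) → t₁ lam ≤ s) :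
    Tendsto
      (fun lam =>
        (t₁ lam / (b ^ (q/(p-1)) * (lam * c) ^ (-1/(p-1))) - 1) /
          ((q/(p-1)) * b ^ ((p*q - p + 1)/(p-1)) * (lam * c) ^ (-p/(p-1))))
      atTop (nhds 1) := by
  have hq0 : 0 < q := by
    have : 1 / p < 1 := (div_lt_one (by linarith)).2 hp
    linarith
  have ht₁ : Tendsto t₁ atTop (𝓝[>] 0) :=
    tendsto_nhdsGT_zero_of_le_pos_roots hp hb hc (hroot.mono fun _ h => ⟨h.1, h.2.2⟩)
  have hu : Tendsto (fun lam => t₁ lam ^ p / b) atTop (𝓝[≠] 0) := by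
    refine tendsto_nhdsWithin_iff.2 ⟨?_, ?_⟩
    · have : ContinuousAt (fun t : ℝ => t ^ p / b) 0 := by fun_prop (disch := linarith)
      simpa only [Function.comp_def, zero_rpow (by linarith : p ≠ 0), zero_div] using
        this.tendsto.comp (ht₁.mono_right nhdsWithin_le_nhds)
    · filter_upwards [hroot] with lam h
      exact (div_pos (rpow_pos_of_pos h.1 p) hb).ne'
  have hr : q / (p - 1) ≠ 0 := (div_pos hq0 (by linarith)).ne'
  refine ((tendsto_one_add_rpow_sub_one_mul_rpow_div hr (q / (p - 1) * p)).comp hu).congr' ?_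
  filter_upwards [hroot, eventually_gt_atTop 0] with lam h hlam
  exact (root_error_ratio_eq hp.ne' hb (mul_pos hlam hc) h.1 h.2.1).symm
end

section
/- Let p > 1, q > 1 - 1/p, b ≥ 0, and suppose u and t > 0 satisfy u = t ‖W‖_p^(-1) W where W solves -W'' = W^p, W > 0 on (0,1), W(0)=W(1)=0, and (t^p + b)^q = λ ‖W‖_p^(1-p) t^(p-1). Then u solves -(∫₀¹ u^p + b)^q u'' = λ u^p on (0,1) with u(0)=u(1)=0 and ‖u‖_p = t. -/
open Real Set

theorem stmt16 (p q b lam t : ℝ) (hp : 1 < p) (hq : q > 1 - 1/p)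
    (hb : 0 ≤ b) (hlam : 0 < lam) (ht : 0 < t)
    (W W' W'' : ℝ → ℝ)
    (hW' : ∀ x ∈ Icc (0:ℝ) 1, HasDerivAt W (W' x) x)
    (hW'' : ∀ x ∈ Icc (0:ℝ) 1, HasDerivAt W' (W'' x) x)
    (hODE : ∀ x ∈ Ioo (0:ℝ) 1, -W'' x = (W x) ^ p)
    (hpos : ∀ x ∈ Ioo (0:ℝ) 1, 0 < W x)
    (hb0 : W 0 = 0) (hb1 : W 1 = 0)
    (np : ℝ) (hnp : np = (∫ x in (0:ℝ)..1, (W x) ^ p) ^ (1/p))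
    (hroot : (t ^ p + b) ^ q = lam * np ^ (1-p) * t ^ (p-1))
    (u : ℝ → ℝ) (hu : ∀ x, u x = t * np⁻¹ * W x) :
    (∀ x ∈ Ioo (0:ℝ) 1,
      -(((∫ y in (0:ℝ)..1, (u y) ^ p) + b) ^ q * (t * np⁻¹ * W'' x)) =
        lam * (u x) ^ p) ∧
    u 0 = 0 ∧ u 1 = 0 ∧ (∫ y in (0:ℝ)..1, (u y) ^ p) ^ (1/p) = t := by
  have hp0 : (0:ℝ) < p := lt_trans one_pos hp
  have hWcont : ContinuousOn W (Icc 0 1) :=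
    fun x hx => (hW' x hx).continuousAt.continuousWithinAt
  have hWnn : ∀ x ∈ Icc (0:ℝ) 1, 0 ≤ W x := by
    intro x hx
    rcases eq_or_lt_of_le hx.1 with h0 | h0
    · simp [← h0, hb0]
    rcases eq_or_lt_of_le hx.2 with h1 | h1
    · simp [h1, hb1]
    · exact (hpos x ⟨h0, h1⟩).le
  have hfc : ContinuousOn (fun x => W x ^ p) (Icc 0 1) := by
    apply hWcont.rpow continuousOn_const
    intro x hx; right; exact hp0
  have hint : IntervalIntegrable (fun x => W x ^ p) MeasureTheory.volume 0 1 := by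
    apply ContinuousOn.intervalIntegrable
    rwa [uIcc_of_le (by norm_num)]
  have hI : 0 < ∫ x in (0:ℝ)..1, (W x) ^ p :=
    intervalIntegral.intervalIntegral_pos_of_pos_on hint
      (fun x hx => rpow_pos_of_pos (hpos x hx) p) one_pos
  set I := ∫ x in (0:ℝ)..1, (W x) ^ p with hIdef
  have hnp0 : 0 < np := hnp ▸ rpow_pos_of_pos hI _
  have hnpp : np ^ p = I := by
    rw [hnp, ← rpow_mul hI.le, one_div_mul_cancel (ne_of_gt hp0), rpow_one]
  have hcoef : (t * np⁻¹) ^ p = t ^ p * (np ^ p)⁻¹ := by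
    rw [mul_rpow ht.le (inv_nonneg.mpr hnp0.le), inv_rpow hnp0.le]
  have hIu : (∫ y in (0:ℝ)..1, (u y) ^ p) = t ^ p := by
    have hcong : ∀ y ∈ uIcc (0:ℝ) 1, (u y) ^ p = (t * np⁻¹) ^ p * (W y) ^ p := by
      intro y hy
      rw [uIcc_of_le (by norm_num)] at hy
      rw [hu y, mul_rpow (by positivity) (hWnn y hy)]
    rw [intervalIntegral.integral_congr hcong, intervalIntegral.integral_const_mul,
      ← hIdef, hcoef, hnpp]
    field_simp
  refine ⟨?_, by simp [hu, hb0], by simp [hu, hb1], ?_⟩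
  · intro x hx
    have hx' : x ∈ Icc (0:ℝ) 1 := ⟨hx.1.le, hx.2.le⟩
    have hW'' : W'' x = -(W x) ^ p := by
      have := hODE x hx; linarith
    rw [hIu, hroot, hW'', hu x,
      mul_rpow (by positivity) (hWnn x hx'), hcoef]
    have h1 : np ^ (1 - p) * np⁻¹ = (np ^ p)⁻¹ := by
      rw [← rpow_neg_one np, ← rpow_add hnp0, ← rpow_neg hnp0.le]
      ring_nf
    have h2 : t ^ (p - 1) * t = t ^ p := by
      nth_rewrite 2 [← rpow_one t]
      rw [← rpow_add ht]; ring_nf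
    calc -(lam * np ^ (1 - p) * t ^ (p - 1) * (t * np⁻¹ * -W x ^ p))
        = lam * ((t ^ (p-1) * t) * (np ^ (1-p) * np⁻¹) * W x ^ p) := by ring
      _ = lam * (t ^ p * (np ^ p)⁻¹ * W x ^ p) := by rw [h1, h2]
  · rw [hIu, ← rpow_mul ht.le, mul_one_div_cancel (ne_of_gt hp0), rpow_one]
end

section
/- For p = 2, q = 1, b > 0 and λ > λ₀ := 2√b ‖W₂‖₂, the functions u_i(x) = ((λ‖W₂‖₂^(-1) ∓ sqrt(λ²‖W₂‖₂^(-2) - 4b))/2) ‖W₂‖₂^(-1) W₂(x) (i = 1,2) each solve -(∫₀¹ u² dx + b) u'' = λ u² on (0,1) with u(0)=u(1)=0, where W₂ is the positive solution of -W'' = W² with Dirichlet conditions on (0,1). -/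
/-!
Since `-W₂'' = W₂²`, the ansatz `u = s W₂` solves `-(‖u‖₂² + b) u'' = λ u²` as soon as
`s² ‖W₂‖₂² + b = λ s`. With `s = t ‖W₂‖₂⁻¹` this is the quadratic
`t² - λ ‖W₂‖₂⁻¹ t + b = 0`, whose discriminant is positive because `λ > 2 √b ‖W₂‖₂`;
`t₁`, `t₂` are its two roots.
-/

open Real Set intervalIntegral

theorem four_mul_lt_sq_of_two_mul_sqrt_lt {b c : ℝ} (h : 2 * √b < c) : 4 * b < c ^ 2 := by
  have hc : 0 < c / 2 := by linarith [sqrt_nonneg b]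
  have hb : b < (c / 2) ^ 2 := (sqrt_lt' hc).mp (by linarith)
  calc 4 * b < 4 * (c / 2) ^ 2 := by linarith
    _ = c ^ 2 := by ring

theorem sq_sub_mul_add_eq_zero_of_quadratic_formula {b c t : ℝ} (hd : 4 * b ≤ c ^ 2)
    (ht : t = (c - √(c ^ 2 - 4 * b)) / 2 ∨ t = (c + √(c ^ 2 - 4 * b)) / 2) :
    t ^ 2 - c * t + b = 0 := by
  have hs := sq_sqrt (sub_nonneg.mpr hd)
  rcases ht with rfl | rfl <;> linear_combination hs / 4

theorem integral_sq_pos_of_pos {W : ℝ → ℝ} {a c : ℝ} (hac : a < c)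
    (hW : ContinuousOn W (Icc a c)) (hpos : ∀ x ∈ Ioo a c, 0 < W x) :
    0 < ∫ x in a..c, W x ^ 2 := by
  have hint : IntervalIntegrable (fun x => W x ^ 2) MeasureTheory.volume a c :=
    (hW.pow 2).intervalIntegrable_of_Icc hac.le
  exact intervalIntegral_pos_of_pos_on hint (fun x hx => pow_pos (hpos x hx) 2) hac

theorem integral_const_mul_sq (a c s : ℝ) (f : ℝ → ℝ) :
    ∫ x in a..c, (s * f x) ^ 2 = s ^ 2 * ∫ x in a..c, f x ^ 2 := by
  simp_rw [mul_pow s]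
  exact integral_const_mul _ _

theorem neg_mul_scaled_eq_of_neg_eq_sq {I b lam s w w'' : ℝ} (hw : -w'' = w ^ 2)
    (hs : s ^ 2 * I + b = lam * s) :
    -((s ^ 2 * I + b) * (s * w'')) = lam * (s * w) ^ 2 := by
  rw [hs]
  linear_combination lam * s ^ 2 * hw

theorem neg_integral_sq_add_mul_eq_of_quadratic {W u : ℝ → ℝ} {a c b lam n t w'' x : ℝ}
    (hn : n ≠ 0) (hI : ∫ y in a..c, W y ^ 2 = n ^ 2) (ht : t ^ 2 - lam * n⁻¹ * t + b = 0)
    (hu : ∀ y, u y = t * n⁻¹ * W y) (hw : -w'' = W x ^ 2) :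
    -(((∫ y in a..c, u y ^ 2) + b) * (t * n⁻¹ * w'')) = lam * u x ^ 2 := by
  simp_rw [hu, integral_const_mul_sq, hI]
  refine neg_mul_scaled_eq_of_neg_eq_sq hw ?_
  rw [mul_pow, inv_pow, inv_mul_cancel_right₀ (pow_ne_zero 2 hn)]
  linear_combination ht

theorem stmt19_general (b lam : ℝ)
    (W W' W'' : ℝ → ℝ)
    (hW' : ∀ x ∈ Icc (0:ℝ) 1, HasDerivAt W (W' x) x)
    (hODE : ∀ x ∈ Ioo (0:ℝ) 1, -W'' x = (W x) ^ 2)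
    (hpos : ∀ x ∈ Ioo (0:ℝ) 1, 0 < W x)
    (hb0 : W 0 = 0) (hb1 : W 1 = 0)
    (n : ℝ) (hn : n = (∫ x in (0:ℝ)..1, (W x) ^ 2) ^ ((1:ℝ)/2))
    (hlam : lam > 2 * Real.sqrt b * n)
    (t₁ t₂ : ℝ)
    (ht₁ : t₁ = (lam * n⁻¹ - Real.sqrt (lam ^ 2 * n⁻¹ ^ 2 - 4 * b)) / 2)
    (ht₂ : t₂ = (lam * n⁻¹ + Real.sqrt (lam ^ 2 * n⁻¹ ^ 2 - 4 * b)) / 2)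
    (u₁ u₂ : ℝ → ℝ)
    (hu₁ : ∀ x, u₁ x = t₁ * n⁻¹ * W x)
    (hu₂ : ∀ x, u₂ x = t₂ * n⁻¹ * W x) :
    (∀ x ∈ Ioo (0:ℝ) 1,
      -(((∫ y in (0:ℝ)..1, (u₁ y) ^ 2) + b) * (t₁ * n⁻¹ * W'' x)) =
        lam * (u₁ x) ^ 2) ∧
    (∀ x ∈ Ioo (0:ℝ) 1,
      -(((∫ y in (0:ℝ)..1, (u₂ y) ^ 2) + b) * (t₂ * n⁻¹ * W'' x)) =
        lam * (u₂ x) ^ 2) ∧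
    u₁ 0 = 0 ∧ u₁ 1 = 0 ∧ u₂ 0 = 0 ∧ u₂ 1 = 0 := by
  have hI : 0 < ∫ x in (0:ℝ)..1, W x ^ 2 := integral_sq_pos_of_pos zero_lt_one
    (fun x hx => (hW' x hx).continuousAt.continuousWithinAt) hpos
  rw [← sqrt_eq_rpow] at hn
  have hn_pos : 0 < n := hn ▸ sqrt_pos.mpr hI
  have hn_sq : ∫ x in (0:ℝ)..1, W x ^ 2 = n ^ 2 := by rw [hn, sq_sqrt hI.le]
  have hdisc : 4 * b ≤ (lam * n⁻¹) ^ 2 := by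
    refine (four_mul_lt_sq_of_two_mul_sqrt_lt ?_).le
    rw [← div_eq_mul_inv]
    exact (lt_div_iff₀ hn_pos).mpr hlam
  rw [← mul_pow] at ht₁ ht₂
  have hr₁ := sq_sub_mul_add_eq_zero_of_quadratic_formula hdisc (.inl ht₁)
  have hr₂ := sq_sub_mul_add_eq_zero_of_quadratic_formula hdisc (.inr ht₂)
  refine ⟨fun x hx => ?_, fun x hx => ?_, ?_, ?_, ?_, ?_⟩
  · exact neg_integral_sq_add_mul_eq_of_quadratic hn_pos.ne' hn_sq hr₁ hu₁ (hODE x hx)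
  · exact neg_integral_sq_add_mul_eq_of_quadratic hn_pos.ne' hn_sq hr₂ hu₂ (hODE x hx)
  all_goals simp only [hu₁, hu₂, hb0, hb1, mul_zero]

theorem stmt19 (b lam : ℝ) (hb : 0 < b)
    (W W' W'' : ℝ → ℝ)
    (hW' : ∀ x ∈ Icc (0:ℝ) 1, HasDerivAt W (W' x) x)
    (hW'' : ∀ x ∈ Icc (0:ℝ) 1, HasDerivAt W' (W'' x) x)
    (hODE : ∀ x ∈ Ioo (0:ℝ) 1, -W'' x = (W x) ^ 2)
    (hpos : ∀ x ∈ Ioo (0:ℝ) 1, 0 < W x)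
    (hb0 : W 0 = 0) (hb1 : W 1 = 0)
    (n : ℝ) (hn : n = (∫ x in (0:ℝ)..1, (W x) ^ 2) ^ ((1:ℝ)/2))
    (hlam : lam > 2 * Real.sqrt b * n)
    (t₁ t₂ : ℝ)
    (ht₁ : t₁ = (lam * n⁻¹ - Real.sqrt (lam ^ 2 * n⁻¹ ^ 2 - 4 * b)) / 2)
    (ht₂ : t₂ = (lam * n⁻¹ + Real.sqrt (lam ^ 2 * n⁻¹ ^ 2 - 4 * b)) / 2)
    (u₁ u₂ : ℝ → ℝ)
    (hu₁ : ∀ x, u₁ x = t₁ * n⁻¹ * W x)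
    (hu₂ : ∀ x, u₂ x = t₂ * n⁻¹ * W x) :
    (∀ x ∈ Ioo (0:ℝ) 1,
      -(((∫ y in (0:ℝ)..1, (u₁ y) ^ 2) + b) * (t₁ * n⁻¹ * W'' x)) =
        lam * (u₁ x) ^ 2) ∧
    (∀ x ∈ Ioo (0:ℝ) 1,
      -(((∫ y in (0:ℝ)..1, (u₂ y) ^ 2) + b) * (t₂ * n⁻¹ * W'' x)) =
        lam * (u₂ x) ^ 2) ∧
    u₁ 0 = 0 ∧ u₁ 1 = 0 ∧ u₂ 0 = 0 ∧ u₂ 1 = 0 :=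
  stmt19_general b lam W W' W'' hW' hODE hpos hb0 hb1 n hn hlam t₁ t₂ ht₁ ht₂ u₁ u₂ hu₁ hu₂
end
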